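/- arXiv:2311.12044 — 3 statements merged into one kernel-verified Lean document; each statement's English description precedes it below -/
import Mathlib

section
/- Let K be a number field, P̃ a prime ideal of O_K above 2, n a positive integer, and p a rational prime with p > 2·ord_P̃(2) and ord_𝔮(n) < p for every prime 𝔮 of O_K dividing n. Let (a, b, c) ∈ O_K³ be a non-trivial primitive solution of x⁴ − y⁴ = n z^p with c ∈ P̃. Then either ord_P̃(a² + b²) = ord_P̃(2) and ord_P̃(a² − b²) = p·ord_P̃(c) + ord_P̃(n) − ord_P̃(2), or ord_P̃(a² − b²) = ord_P̃(2) and ord_P̃(a² + b²) = p·ord_P̃(c) + ord_P̃(n) − ord_P̃(2); in particular, min{ord_P̃(a² + b²), ord_P̃(a² − b²)} = ord_P̃(2). -/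
open NumberField IsDedekindDomain

/-- The `v`-adic valuation `ord_v(x) ∈ ℤ` of an element `x` of a number field `K`
(with junk value `0` at `x = 0`). -/
noncomputable def ordK {K : Type*} [Field K] [NumberField K]
    (v : HeightOneSpectrum (𝓞 K)) (x : K) : ℤ :=
  open scoped Classical in
  if hx : x = 0 then 0
  else -(Multiplicative.toAdd (WithZero.unzero ((v.valuation K).ne_zero_iff.mpr hx)))

/-- `x ∈ K^×` is an `S`-unit: `ord_𝔭(x) = 0` for all primes `𝔭 ∉ S`. -/
def IsSUnit {K : Type*} [Field K] [NumberField K]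
    (S : Set (HeightOneSpectrum (𝓞 K))) (x : K) : Prop :=
  x ≠ 0 ∧ ∀ v ∉ S, ordK v x = 0

/-!
Put `x = a² + b²`, `y = a² - b²`. Primitivity and `c ∈ P̃` force `a ∉ P̃`, so
`ord(x + y) = ord(2a²) = ord 2`, while `ord x + ord y = p·ord c + ord n ≥ p > 2·ord 2`.
If `ord x = ord y`, the ultrametric inequality would give `ord x ≤ ord 2`, contradicting the
bound on the sum; so `ord x ≠ ord y`, the smaller one equals `ord (x + y) = ord 2`, and the
larger one is read off from `ord x + ord y`.
-/

section ordK

variable {K : Type*} [Field K] [NumberField K] (v : HeightOneSpectrum (𝓞 K))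

lemma ordK_eq_neg_log (x : K) : ordK v x = -WithZero.log (v.valuation K x) := by
  by_cases hx : x = 0
  · simp [ordK, hx]
  · rw [ordK, dif_neg hx, WithZero.toAdd_unzero_eq_log]

lemma ordK_mul {x y : K} (hx : x ≠ 0) (hy : y ≠ 0) :
    ordK v (x * y) = ordK v x + ordK v y := by
  rw [ordK_eq_neg_log, ordK_eq_neg_log, ordK_eq_neg_log, map_mul,
    WithZero.log_mul ((Valuation.ne_zero_iff _).2 hx) ((Valuation.ne_zero_iff _).2 hy), neg_add]

lemma ordK_pow (x : K) (k : ℕ) : ordK v (x ^ k) = k * ordK v x := by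
  simp only [ordK_eq_neg_log, map_pow, WithZero.log_pow, nsmul_eq_mul, mul_neg]

lemma ordK_le_ordK_iff {x y : K} (hx : x ≠ 0) (hy : y ≠ 0) :
    ordK v x ≤ ordK v y ↔ v.valuation K y ≤ v.valuation K x := by
  rw [ordK_eq_neg_log, ordK_eq_neg_log, neg_le_neg_iff,
    WithZero.log_le_log ((Valuation.ne_zero_iff _).2 hy) ((Valuation.ne_zero_iff _).2 hx)]

lemma min_ordK_le_ordK_add {x y : K} (hx : x ≠ 0) (hy : y ≠ 0) (hxy : x + y ≠ 0) :
    min (ordK v x) (ordK v y) ≤ ordK v (x + y) := by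
  rcases (v.valuation K).map_add' x y with h | h
  · exact min_le_of_left_le ((ordK_le_ordK_iff v hx hxy).2 h)
  · exact min_le_of_right_le ((ordK_le_ordK_iff v hy hxy).2 h)

lemma ordK_add_eq_left_of_lt {x y : K} (hx : x ≠ 0) (hy : y ≠ 0) (h : ordK v x < ordK v y) :
    ordK v (x + y) = ordK v x := by
  have hval : v.valuation K y < v.valuation K x :=
    not_le.1 fun hle => h.not_ge ((ordK_le_ordK_iff v hy hx).2 hle)
  rw [ordK_eq_neg_log, ordK_eq_neg_log, (v.valuation K).map_add_eq_of_lt_left hval]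

lemma ordK_ne_and_min_eq_ordK_add {x y : K} (hx : x ≠ 0) (hy : y ≠ 0) (hxy : x + y ≠ 0)
    (h : 2 * ordK v (x + y) < ordK v x + ordK v y) :
    ordK v x ≠ ordK v y ∧ min (ordK v x) (ordK v y) = ordK v (x + y) := by
  have hmin := min_ordK_le_ordK_add v hx hy hxy
  have hne : ordK v x ≠ ordK v y := by
    intro heq
    rw [heq, min_self] at hmin
    omega
  refine ⟨hne, ?_⟩
  rcases hne.lt_or_gt with hlt | hlt
  · rw [min_eq_left hlt.le, ordK_add_eq_left_of_lt v hx hy hlt]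
  · rw [min_eq_right hlt.le, add_comm, ordK_add_eq_left_of_lt v hy hx hlt]

lemma ordK_coe_nonneg (r : 𝓞 K) : 0 ≤ ordK v (r : K) := by
  rcases eq_or_ne (v.valuation K r) 0 with h | h
  · simp [ordK_eq_neg_log, h]
  · rw [ordK_eq_neg_log, neg_nonneg, WithZero.log_le_iff_le_exp h, WithZero.exp_zero]
    exact v.valuation_le_one (K := K) r

lemma ordK_natCast_nonneg (m : ℕ) : 0 ≤ ordK v (m : K) := by
  simpa using ordK_coe_nonneg v (m : 𝓞 K)

lemma ordK_coe_pos_iff {r : 𝓞 K} (hr : r ≠ 0) : 0 < ordK v (r : K) ↔ r ∈ v.asIdeal := by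
  have hval : v.valuation K r ≠ 0 := (Valuation.ne_zero_iff _).2 (by simpa using hr)
  rw [← v.valuation_lt_one_iff_mem (K := K), ordK_eq_neg_log, neg_pos,
    WithZero.log_lt_iff_lt_exp hval, WithZero.exp_zero]

lemma ordK_coe_eq_zero_of_notMem {r : 𝓞 K} (hr : r ∉ v.asIdeal) : ordK v (r : K) = 0 :=
  have hr0 : r ≠ 0 := fun h => hr (h ▸ v.asIdeal.zero_mem)
  le_antisymm (not_lt.1 ((ordK_coe_pos_iff v hr0).not.2 hr)) (ordK_coe_nonneg v r)

end ordK

lemma Ideal.IsPrime.notMem_of_pow_sub_pow_mem {R : Type*} [CommRing R] {P : Ideal R}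
    (hP : P.IsPrime) {a b c : R} {k : ℕ} (hk : k ≠ 0) (hab : a ^ k - b ^ k ∈ P) (hc : c ∈ P)
    (hprim : Ideal.span {a, b, c} = ⊤) : a ∉ P := by
  intro ha
  have hb : b ∈ P := hP.mem_of_pow_mem k (by
    simpa using P.sub_mem (P.pow_mem_of_mem ha k (Nat.pos_of_ne_zero hk)) hab)
  refine hP.ne_top (eq_top_iff.2 (hprim ▸ ?_))
  simp [Ideal.span_le, Set.insert_subset_iff, ha, hb, hc]

theorem valuations_of_a2_plus_b2_and_a2_minus_b2_general
    (K : Type*) [Field K] [NumberField K]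
    (Pt : HeightOneSpectrum (𝓞 K))
    (n : ℕ) (hn : 0 < n) (p : ℕ) (hp : p.Prime)
    (hp2 : (p : ℤ) > 2 * ordK Pt (2 : K))
    (a b c : 𝓞 K) (heq : a ^ 4 - b ^ 4 = (n : 𝓞 K) * c ^ p)
    (hnontriv : a * b * c ≠ 0) (hprim : Ideal.span {a, b, c} = ⊤)
    (hc : c ∈ Pt.asIdeal) :
    ((ordK Pt ((a : K) ^ 2 + (b : K) ^ 2) = ordK Pt (2 : K) ∧
      ordK Pt ((a : K) ^ 2 - (b : K) ^ 2) =
        (p : ℤ) * ordK Pt (c : K) + ordK Pt (n : K) - ordK Pt (2 : K)) ∨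
     (ordK Pt ((a : K) ^ 2 - (b : K) ^ 2) = ordK Pt (2 : K) ∧
      ordK Pt ((a : K) ^ 2 + (b : K) ^ 2) =
        (p : ℤ) * ordK Pt (c : K) + ordK Pt (n : K) - ordK Pt (2 : K))) ∧
    min (ordK Pt ((a : K) ^ 2 + (b : K) ^ 2)) (ordK Pt ((a : K) ^ 2 - (b : K) ^ 2)) =
      ordK Pt (2 : K) := by
  have ha : a ≠ 0 := left_ne_zero_of_mul (left_ne_zero_of_mul hnontriv)
  have hc0 : c ≠ 0 := right_ne_zero_of_mul hnontriv
  have haK : (a : K) ≠ 0 := by simpa using ha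
  have hrhs : (n : K) * (c : K) ^ p ≠ 0 :=
    mul_ne_zero (by simpa using hn.ne') (pow_ne_zero p (by simpa using hc0))
  have haP : a ∉ Pt.asIdeal :=
    Pt.isPrime.notMem_of_pow_sub_pow_mem four_ne_zero
      (heq ▸ Pt.asIdeal.mul_mem_left _ (Pt.asIdeal.pow_mem_of_mem hc p hp.pos)) hc hprim
  set x := (a : K) ^ 2 + (b : K) ^ 2
  set y := (a : K) ^ 2 - (b : K) ^ 2
  have hfactor : x * y = (n : K) * (c : K) ^ p := by
    have h := congrArg ((↑) : 𝓞 K → K) heq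
    push_cast at h
    linear_combination h
  have hxy : x + y = 2 * (a : K) ^ 2 := by ring
  obtain ⟨hx, hy⟩ := mul_ne_zero_iff.1 (hfactor ▸ hrhs)
  have hsum : ordK Pt (x + y) = ordK Pt (2 : K) := by
    rw [hxy, ordK_mul Pt two_ne_zero (pow_ne_zero 2 haK), ordK_pow,
      ordK_coe_eq_zero_of_notMem Pt haP, mul_zero, add_zero]
  have hprod : ordK Pt x + ordK Pt y = p * ordK Pt (c : K) + ordK Pt (n : K) := by
    rw [← ordK_mul Pt hx hy, hfactor, ordK_mul Pt (left_ne_zero_of_mul hrhs)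
      (right_ne_zero_of_mul hrhs), ordK_pow, add_comm]
  have hc_pos := (ordK_coe_pos_iff Pt hc0).2 hc
  have hn_nonneg := ordK_natCast_nonneg Pt n
  obtain ⟨hne, hmin⟩ := ordK_ne_and_min_eq_ordK_add Pt hx hy
    (hxy ▸ mul_ne_zero two_ne_zero (pow_ne_zero 2 haK)) (by rw [hsum]; nlinarith)
  rw [hsum] at hmin
  refine ⟨?_, hmin⟩
  rcases hne.lt_or_gt with hlt | hlt
  · rw [min_eq_left hlt.le] at hmin
    exact Or.inl ⟨hmin, by omega⟩
  · rw [min_eq_right hlt.le] at hmin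
    exact Or.inr ⟨hmin, by omega⟩

theorem valuations_of_a2_plus_b2_and_a2_minus_b2
    (K : Type*) [Field K] [NumberField K]
    (Pt : HeightOneSpectrum (𝓞 K)) (hPt2 : (2 : 𝓞 K) ∈ Pt.asIdeal)
    (n : ℕ) (hn : 0 < n) (p : ℕ) (hp : p.Prime)
    (hp2 : (p : ℤ) > 2 * ordK Pt (2 : K))
    (hnord : ∀ q : HeightOneSpectrum (𝓞 K), (n : 𝓞 K) ∈ q.asIdeal →
      ordK q (n : K) < (p : ℤ))
    (a b c : 𝓞 K) (heq : a ^ 4 - b ^ 4 = (n : 𝓞 K) * c ^ p)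
    (hnontriv : a * b * c ≠ 0) (hprim : Ideal.span {a, b, c} = ⊤)
    (hc : c ∈ Pt.asIdeal) :
    ((ordK Pt ((a : K) ^ 2 + (b : K) ^ 2) = ordK Pt (2 : K) ∧
      ordK Pt ((a : K) ^ 2 - (b : K) ^ 2) =
        (p : ℤ) * ordK Pt (c : K) + ordK Pt (n : K) - ordK Pt (2 : K)) ∨
     (ordK Pt ((a : K) ^ 2 - (b : K) ^ 2) = ordK Pt (2 : K) ∧
      ordK Pt ((a : K) ^ 2 + (b : K) ^ 2) =
        (p : ℤ) * ordK Pt (c : K) + ordK Pt (n : K) - ordK Pt (2 : K))) ∧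
    min (ordK Pt ((a : K) ^ 2 + (b : K) ^ 2)) (ordK Pt ((a : K) ^ 2 - (b : K) ^ 2)) =
      ordK Pt (2 : K) :=
  valuations_of_a2_plus_b2_and_a2_minus_b2_general K Pt n hn p hp hp2 a b c heq hnontriv hprim hc
end

section
/- Let p ≥ 5 be a rational prime and let G be a subgroup of GL₂(𝔽_p) whose order is divisible by p. Then either there exists a one-dimensional 𝔽_p-subspace of 𝔽_p² that is stable under every element of G, or G contains SL₂(𝔽_p). -/
/-!
By Cauchy, `G` contains an element `u` of order `p`; in characteristic `p` it is
unipotent, so it fixes a line `⟨v⟩`. If no line is `G`-stable, some `h ∈ G` moves `v` off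
`⟨v⟩`, and in the basis `(v, h v)` the elements `u` and `h u h⁻¹` become nontrivial upper
and lower transvections. Their powers give every transvection of `𝔽_p`, and these generate
`SL₂(𝔽_p)`.
-/

open Matrix
open Matrix.SpecialLinearGroup (toGL)

namespace Matrix

theorem pow_card_eq_zero_of_isNilpotent {n R : Type*} [Fintype n] [DecidableEq n] [CommRing R]
    [IsDomain R] {N : Matrix n n R} (hN : IsNilpotent N) : N ^ Fintype.card n = 0 := by
  have hchar : N.charpoly = Polynomial.X ^ Fintype.card n :=
    sub_eq_zero.mp (isNilpotent_charpoly_sub_pow_of_isNilpotent hN).eq_zero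
  simpa [hchar] using N.aeval_self_charpoly

theorem eq_transvection_of_sub_one_sq_eq_zero {K : Type*} [Field K] {A : Matrix (Fin 2) (Fin 2) K}
    (hA : (A - 1) ^ 2 = 0) {i j : Fin 2} (hij : i ≠ j)
    (hfix : A *ᵥ Pi.single i 1 = Pi.single i 1) : A = transvection i j (A i j) := by
  have hsq (k : Fin 2) : ((A - 1) ^ 2 : Matrix (Fin 2) (Fin 2) K) k k = 0 := by
    rw [hA, Matrix.zero_apply]
  have hcol (k : Fin 2) : A k i = (Pi.single i 1 : Fin 2 → K) k := by
    simpa [mulVec_single] using congrFun hfix k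
  simp only [sq, mul_apply, Fin.sum_univ_two, Matrix.sub_apply] at hsq
  fin_cases i <;> fin_cases j <;> simp only [ne_eq, not_true_eq_false] at hij
  · have h00 : A 0 0 = 1 := by simpa using hcol 0
    have h10 : A 1 0 = 0 := by simpa using hcol 1
    have h11 : A 1 1 = 1 := by simpa [h10, sub_eq_zero] using hsq 1
    ext k l; fin_cases k <;> fin_cases l <;> simp [transvection, h00, h10, h11]
  · have h01 : A 0 1 = 0 := by simpa using hcol 0
    have h11 : A 1 1 = 1 := by simpa using hcol 1
    have h00 : A 0 0 = 1 := by simpa [h01, sub_eq_zero] using hsq 0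
    ext k l; fin_cases k <;> fin_cases l <;> simp [transvection, h00, h01, h11]

section CharP

variable {n K : Type*} [Fintype n] [DecidableEq n] [Field K] (p : ℕ) [Fact p.Prime] [CharP K p]

theorem isNilpotent_sub_one_of_pow_eq_one [Nonempty n] {M : Matrix n n K} (hM : M ^ p = 1) :
    IsNilpotent (M - 1) :=
  ⟨p, by rw [sub_pow_char_of_commute p (Commute.one_right M), hM, one_pow, sub_self]⟩

theorem exists_mulVec_eq_self_of_pow_eq_one [Nonempty n] {M : Matrix n n K} (hM : M ^ p = 1) :
    ∃ v ≠ 0, M *ᵥ v = v := by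
  obtain ⟨k, hk⟩ := isNilpotent_sub_one_of_pow_eq_one p hM
  have hdet : (M - 1).det = 0 := eq_zero_of_pow_eq_zero (by rw [← det_pow, hk, det_zero])
  obtain ⟨v, hv, hMv⟩ := exists_mulVec_eq_zero_iff.mpr hdet
  exact ⟨v, hv, by rwa [sub_mulVec, one_mulVec, sub_eq_zero] at hMv⟩

theorem eq_transvection_of_pow_eq_one {A : Matrix (Fin 2) (Fin 2) K} (hA : A ^ p = 1)
    {i j : Fin 2} (hij : i ≠ j) (hfix : A *ᵥ Pi.single i 1 = Pi.single i 1) :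
    A = transvection i j (A i j) :=
  eq_transvection_of_sub_one_sq_eq_zero
    (by simpa using pow_card_eq_zero_of_isNilpotent (isNilpotent_sub_one_of_pow_eq_one p hA))
    hij hfix

end CharP

namespace SpecialLinearGroup

theorem transvection_pow {ι R : Type*} [Fintype ι] [DecidableEq ι] [CommRing R] {i j : ι}
    (hij : i ≠ j) (a : R) (k : ℕ) : transvection hij a ^ k = transvection hij (k * a) := by
  induction k with
  | zero => simp [transvection_coeff_zero]
  | succ k ih => rw [pow_succ, ih, ← transvection_add, Nat.cast_succ, add_one_mul]

theorem transvection_mem_zpowers {ι : Type*} [Fintype ι] [DecidableEq ι] {p : ℕ}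
    [Fact p.Prime] {i j : ι} (hij : i ≠ j) {a : ZMod p} (ha : a ≠ 0) (c : ZMod p) :
    transvection hij c ∈ Subgroup.zpowers (transvection hij a) := by
  have hc : c = ((c / a).val : ZMod p) * a := by
    rw [ZMod.natCast_zmod_val, div_mul_cancel₀ _ ha]
  rw [hc, ← transvection_pow]
  exact Subgroup.npow_mem_zpowers _ _

end SpecialLinearGroup

theorem SL2.eq_top_of_transvection_mem {K : Type*} [Field K]
    {H : Subgroup (SpecialLinearGroup (Fin 2) K)}
    (hH : ∀ (i j : Fin 2) (hij : i ≠ j) (c : K), SpecialLinearGroup.transvection hij c ∈ H) :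
    H = ⊤ :=
  (Subgroup.eq_top_iff' H).mpr (SL2.transvection_induction (· ∈ H) hH fun _ _ => mul_mem)

namespace GeneralLinearGroup

theorem exists_mulVec_single_eq {n K : Type*} [Fintype n] [DecidableEq n] [Field K]
    {b : n → n → K} (hb : LinearIndependent K b) :
    ∃ P : GL n K, ∀ i, (P : Matrix n n K) *ᵥ Pi.single i 1 = b i := by
  have hunit : IsUnit (Matrix.of b)ᵀ :=
    (isUnit_transpose _).mpr (linearIndependent_rows_iff_isUnit.mp hb)
  exact ⟨hunit.unit, fun i => by ext k; simp⟩

theorem exists_conj_eq_transvection {K : Type*} [Field K] (p : ℕ) [Fact p.Prime] [CharP K p]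
    {u P : GL (Fin 2) K} (hu : u ^ p = 1) (hu1 : u ≠ 1) {i j : Fin 2} (hij : i ≠ j)
    (hfix : (u : Matrix (Fin 2) (Fin 2) K) *ᵥ ((P : Matrix (Fin 2) (Fin 2) K) *ᵥ Pi.single i 1)
      = (P : Matrix (Fin 2) (Fin 2) K) *ᵥ Pi.single i 1) :
    ∃ a ≠ 0, P⁻¹ * u * P = toGL (SpecialLinearGroup.transvection hij a) := by
  set A := P⁻¹ * u * P with hA_def
  have hAp : A ^ p = 1 := by
    rw [show A = MulAut.conj P⁻¹ u by simp [hA_def], ← map_pow, hu, map_one]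
  have hAfix : (A : Matrix (Fin 2) (Fin 2) K) *ᵥ Pi.single i 1 = Pi.single i 1 := by
    rw [hA_def, Units.val_mul, Units.val_mul, ← mulVec_mulVec, ← mulVec_mulVec, hfix,
      mulVec_mulVec, ← Units.val_mul, inv_mul_cancel, Units.val_one, one_mulVec]
  have hA := eq_transvection_of_pow_eq_one p
    (by rw [← Units.val_pow_eq_pow_val, hAp, Units.val_one]) hij hAfix
  refine ⟨(A : Matrix (Fin 2) (Fin 2) K) i j, fun h0 => hu1 ?_, Units.ext hA⟩
  rw [h0, transvection_zero] at hA
  have hA1 : A = 1 := Units.ext hA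
  rw [hA_def, mul_assoc, inv_mul_eq_one] at hA1
  exact mul_eq_right.mp hA1.symm

end GeneralLinearGroup

end Matrix

namespace Subgroup

theorem exists_linearIndependent_mulVec {n K : Type*} [Fintype n] [DecidableEq n]
    [Field K] {G : Subgroup (GL n K)}
    (hG : ¬∃ W : Submodule K (n → K), Module.finrank K W = 1 ∧
      ∀ g ∈ G, ∀ x ∈ W, (g : Matrix n n K) *ᵥ x ∈ W)
    {v : n → K} (hv : v ≠ 0) :
    ∃ h ∈ G, LinearIndependent K ![v, (h : Matrix n n K) *ᵥ v] := by
  by_contra! hdep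
  refine hG ⟨K ∙ v, finrank_span_singleton hv, fun g hg x hx => ?_⟩
  obtain ⟨a, hav⟩ := not_forall_not.mp ((LinearIndependent.pair_iff' hv).not.mp (hdep g hg))
  obtain ⟨b, rfl⟩ := Submodule.mem_span_singleton.mp hx
  rw [mulVec_smul, ← hav, smul_smul]
  exact Submodule.smul_mem _ _ (Submodule.mem_span_singleton_self v)

section ZModP

variable {p : ℕ} [Fact p.Prime]

theorem mem_of_det_eq_one_of_conj_transvection_mem
    (G : Subgroup (GL (Fin 2) (ZMod p))) (P : GL (Fin 2) (ZMod p)) {x y : GL (Fin 2) (ZMod p)}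
    (hx : x ∈ G) (hy : y ∈ G) {a b : ZMod p} (ha : a ≠ 0) (hb : b ≠ 0)
    (hPx : P⁻¹ * x * P = toGL (SpecialLinearGroup.transvection zero_ne_one a))
    (hPy : P⁻¹ * y * P = toGL (SpecialLinearGroup.transvection one_ne_zero b))
    {g : GL (Fin 2) (ZMod p)} (hg : (g : Matrix (Fin 2) (Fin 2) (ZMod p)).det = 1) : g ∈ G := by
  set H := (G.comap (MulAut.conj P).toMonoidHom).comap toGL
  have hmem : ∀ {z : GL (Fin 2) (ZMod p)} {s}, z ∈ G → P⁻¹ * z * P = toGL s → s ∈ H := by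
    intro z s hz hzs
    simpa [H, ← hzs, mul_assoc] using hz
  have hH : H = ⊤ := by
    refine SL2.eq_top_of_transvection_mem fun i j hij c => ?_
    fin_cases i <;> fin_cases j <;> simp only [ne_eq, not_true_eq_false] at hij
    · exact zpowers_le.mpr (hmem hx hPx) (SpecialLinearGroup.transvection_mem_zpowers _ ha c)
    · exact zpowers_le.mpr (hmem hy hPy) (SpecialLinearGroup.transvection_mem_zpowers _ hb c)
  let s : SpecialLinearGroup (Fin 2) (ZMod p) :=
    ⟨(P⁻¹ * g * P : GL (Fin 2) (ZMod p)), by simp [hg, (isUnits_det_units P).ne_zero]⟩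
  have hs : MulAut.conj P (toGL s) ∈ G := (hH ▸ mem_top s : s ∈ H)
  have hsg : toGL s = P⁻¹ * g * P := Units.ext rfl
  simpa [hsg, mul_assoc] using hs

theorem mem_of_det_eq_one_of_pow_eq_one
    {G : Subgroup (GL (Fin 2) (ZMod p))} {u h : GL (Fin 2) (ZMod p)} (huG : u ∈ G) (hhG : h ∈ G)
    (hu : u ^ p = 1) (hu1 : u ≠ 1) {v : Fin 2 → ZMod p}
    (huv : (u : Matrix (Fin 2) (Fin 2) (ZMod p)) *ᵥ v = v)
    (hli : LinearIndependent (ZMod p) ![v, (h : Matrix (Fin 2) (Fin 2) (ZMod p)) *ᵥ v])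
    {g : GL (Fin 2) (ZMod p)} (hg : (g : Matrix (Fin 2) (Fin 2) (ZMod p)).det = 1) : g ∈ G := by
  obtain ⟨P, hP⟩ := GeneralLinearGroup.exists_mulVec_single_eq hli
  obtain ⟨a, ha, hPu⟩ :=
    GeneralLinearGroup.exists_conj_eq_transvection p hu hu1 zero_ne_one (by rw [hP 0]; exact huv)
  have hconj : h * u * h⁻¹ = MulAut.conj h u := rfl
  obtain ⟨b, hb, hPw⟩ := GeneralLinearGroup.exists_conj_eq_transvection p (u := h * u * h⁻¹)
    (by rw [hconj, ← map_pow, hu, map_one])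
    (by rwa [hconj, map_ne_one_iff _ (MulEquiv.injective _)])
    one_ne_zero (by
      rw [hP 1, cons_val_one, cons_val_zero, mulVec_mulVec, ← Units.val_mul,
        inv_mul_cancel_right, Units.val_mul, ← mulVec_mulVec, huv])
  exact G.mem_of_det_eq_one_of_conj_transvection_mem P huG
    (mul_mem (mul_mem hhG huG) (inv_mem hhG)) ha hb hPu hPw hg

end ZModP

end Subgroup

theorem subgroup_of_GL2_with_order_divisible_by_p_general
    (p : ℕ) (hp : p.Prime)
    (G : Subgroup (GL (Fin 2) (ZMod p))) (hG : p ∣ Nat.card G) :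
    (∃ W : Submodule (ZMod p) (Fin 2 → ZMod p),
      Module.finrank (ZMod p) W = 1 ∧
      ∀ g ∈ G, ∀ x ∈ W,
        Matrix.mulVec (g : Matrix (Fin 2) (Fin 2) (ZMod p)) x ∈ W) ∨
    (∀ g : GL (Fin 2) (ZMod p),
      (g : Matrix (Fin 2) (Fin 2) (ZMod p)).det = 1 → g ∈ G) := by
  have := Fact.mk hp
  refine or_iff_not_imp_left.mpr fun hG_line g hg => ?_
  obtain ⟨⟨u, huG⟩, hu⟩ := exists_prime_orderOf_dvd_card' p hG
  rw [Subgroup.orderOf_mk] at hu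
  have hup : u ^ p = 1 := orderOf_dvd_iff_pow_eq_one.mp hu.dvd
  have hu1 : u ≠ 1 := by
    rintro rfl
    rw [orderOf_one] at hu
    exact hp.one_lt.ne hu
  have hup' : (u : Matrix (Fin 2) (Fin 2) (ZMod p)) ^ p = 1 := by
    rw [← Units.val_pow_eq_pow_val, hup, Units.val_one]
  obtain ⟨v, hv, huv⟩ := exists_mulVec_eq_self_of_pow_eq_one p hup'
  obtain ⟨h, hhG, hli⟩ := G.exists_linearIndependent_mulVec hG_line hv
  exact G.mem_of_det_eq_one_of_pow_eq_one huG hhG hup hu1 huv hli hg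

theorem subgroup_of_GL2_with_order_divisible_by_p
    (p : ℕ) (hp : p.Prime) (hp5 : 5 ≤ p)
    (G : Subgroup (GL (Fin 2) (ZMod p))) (hG : p ∣ Nat.card G) :
    (∃ W : Submodule (ZMod p) (Fin 2 → ZMod p),
      Module.finrank (ZMod p) W = 1 ∧
      ∀ g ∈ G, ∀ x ∈ W,
        Matrix.mulVec (g : Matrix (Fin 2) (Fin 2) (ZMod p)) x ∈ W) ∨
    (∀ g : GL (Fin 2) (ZMod p),
      (g : Matrix (Fin 2) (Fin 2) (ZMod p)).det = 1 → g ∈ G) :=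
  subgroup_of_GL2_with_order_divisible_by_p_general p hp G hG
end

section
/- Let K be a number field in which 3 splits completely, and let S be a finite set of prime ideals of O_K disjoint from the set of primes above 3. Let (λ, μ) be a solution of the S-unit equation λ + μ = 1 with λ, μ ∈ O_K. Then λ ≡ −1 (mod 3O_K) and μ ≡ −1 (mod 3O_K). -/
/-!
At a prime `v ∣ 3` of residue degree one the residue field is `𝔽₃`. An `S`-unit with `v ∉ S`
that is integral has nonzero residue at `v`, and the only way to write `1` as a sum of two
nonzero elements of `𝔽₃` is `1 = 2 + 2`; hence `λ ≡ μ ≡ -1 (mod v)`. Because `3` splits completely,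
`3 𝓞_K` is the product, hence the intersection, of these pairwise distinct primes.
-/

open NumberField IsDedekindDomain

theorem valuation_eq_one_of_ordK_eq_zero {K : Type*} [Field K] [NumberField K]
    {v : HeightOneSpectrum (𝓞 K)} {x : K} (hx : x ≠ 0) (h : ordK v x = 0) :
    v.valuation K x = 1 := by
  rw [ordK, dif_neg hx, neg_eq_zero, toAdd_eq_zero] at h
  rw [← WithZero.coe_unzero ((v.valuation K).ne_zero_iff.mpr hx), h, WithZero.coe_one]

theorem IsSUnit.notMem_asIdeal {K : Type*} [Field K] [NumberField K]
    {S : Set (HeightOneSpectrum (𝓞 K))} {a : 𝓞 K} (ha : IsSUnit S (a : K))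
    {v : HeightOneSpectrum (𝓞 K)} (hv : v ∉ S) : a ∉ v.asIdeal :=
  (v.valuation_eq_one_iff_notMem (K := K)).mp
    (valuation_eq_one_of_ordK_eq_zero ha.1 (ha.2 v hv))

theorem add_one_eq_zero_of_card_eq_three {R : Type*} [Ring R] (hR : Nat.card R = 3)
    {x y : R} (hx : x ≠ 0) (hy : y ≠ 0) (hxy : x + y = 1) : x + 1 = 0 := by
  have : Finite R := Nat.finite_of_card_ne_zero (by omega)
  have := Fintype.ofFinite R
  let e : ZMod 3 ≃+* R :=
    ZMod.ringEquivOfPrime R Nat.prime_three (Nat.card_eq_fintype_card (α := R) ▸ hR)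
  have inZMod3 : ∀ x y : ZMod 3, x ≠ 0 → y ≠ 0 → x + y = 1 → x + 1 = 0 := by decide
  obtain ⟨x, rfl⟩ := e.surjective x
  obtain ⟨y, rfl⟩ := e.surjective y
  rw [← map_one e, ← map_add] at hxy ⊢
  rw [inZMod3 x y (by simpa using hx) (by simpa using hy) (e.injective hxy), map_zero]

theorem Ideal.add_one_mem_of_card_quotient_eq_three {R : Type*} [CommRing R] {P : Ideal R}
    (hP : Nat.card (R ⧸ P) = 3) {x y : R} (hx : x ∉ P) (hy : y ∉ P) (hxy : x + y = 1) :
    x + 1 ∈ P := by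
  rw [← Ideal.Quotient.eq_zero_iff_mem, map_add, map_one]
  exact add_one_eq_zero_of_card_eq_three hP (mt Ideal.Quotient.eq_zero_iff_mem.mp hx)
    (mt Ideal.Quotient.eq_zero_iff_mem.mp hy) (by rw [← map_add, hxy, map_one])

theorem IsDedekindDomain.HeightOneSpectrum.mem_prod_asIdeal_iff {R : Type*} [CommRing R]
    [IsDedekindDomain R] (T : Finset (HeightOneSpectrum R)) (x : R) :
    x ∈ ∏ v ∈ T, v.asIdeal ↔ ∀ v ∈ T, x ∈ v.asIdeal := by
  have hcoprime : (T : Set (HeightOneSpectrum R)).Pairwise (Function.onFun IsCoprime asIdeal) :=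
    fun v _ w _ hvw => Ideal.isCoprime_of_isMaximal (HeightOneSpectrum.ext_iff.ne.mp hvw)
  rw [Ideal.prod_eq_iInf_of_pairwise_isCoprime hcoprime]
  simp only [Submodule.mem_iInf]

theorem S_unit_solutions_congruent_neg_one_mod_3
    (K : Type*) [Field K] [NumberField K]
    (hsplit3 : ∃ T : Finset (HeightOneSpectrum (𝓞 K)),
      T.card = Module.finrank ℚ K ∧
      Ideal.span {(3 : 𝓞 K)} = ∏ v ∈ T, v.asIdeal ∧
      ∀ v ∈ T, Nat.card ((𝓞 K) ⧸ v.asIdeal) = 3)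
    (S : Finset (HeightOneSpectrum (𝓞 K)))
    (hS : ∀ v ∈ S, (3 : 𝓞 K) ∉ v.asIdeal)
    (a b : 𝓞 K) (ha : IsSUnit (↑S) ((a : K))) (hb : IsSUnit (↑S) ((b : K)))
    (hab : a + b = 1) :
    a + 1 ∈ Ideal.span {(3 : 𝓞 K)} ∧ b + 1 ∈ Ideal.span {(3 : 𝓞 K)} := by
  obtain ⟨T, -, hprod, hres⟩ := hsplit3
  have three_mem : ∀ v ∈ T, (3 : 𝓞 K) ∈ v.asIdeal :=
    (HeightOneSpectrum.mem_prod_asIdeal_iff T 3).mp (hprod ▸ Ideal.mem_span_singleton_self 3)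
  have key : ∀ {x y : 𝓞 K}, IsSUnit S (x : K) → IsSUnit S (y : K) → x + y = 1 →
      x + 1 ∈ Ideal.span {(3 : 𝓞 K)} := by
    intro x y hx hy hxy
    rw [hprod, HeightOneSpectrum.mem_prod_asIdeal_iff]
    intro v hv
    have hvS : v ∉ (S : Set _) := fun h => hS v h (three_mem v hv)
    exact Ideal.add_one_mem_of_card_quotient_eq_three (hres v hv)
      (hx.notMem_asIdeal hvS) (hy.notMem_asIdeal hvS) hxy
  exact ⟨key ha hb hab, key hb ha (add_comm b a ▸ hab)⟩
end
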